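/- For the complete intersection ideal I = (x₀,…,x₄) in S = k[x₀,…,x₄] with Koszul syzygy matrices: d₂ the 5×10 matrix of Koszul relations among x₀,…,x₄, d₃ a symmetric 10×10 matrix of syzygies of d₂ (as explicitly given), and d₄ = −d₂ᵗ, the wedge composition D₄ = d₂ ∧ d₃ ∧ d₄ equals 6 times the skew-symmetric 5×5 matrix whose (i,j) entry (i<j) is ± the wedge of the three variables complementary to {x_{i−1}, x_{j−1}} with alternating signs (−1)^{i+j+1}. -/

import Mathlib

/-!
Index the columns of `d₂` by the 2-subsets `{p, q}` of `{0, …, 4}`: that column carries `±x_q` in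
row `p` and `±x_p` in row `q`, and `d₃` has a nonzero entry only at two disjoint subsets, namely
`±` the fifth variable. So every term of a diagonal entry of `D₄` vanishes, while the entry `(i, j)`,
`i ≠ j`, is a sum of six wedges, one for each ordering of the three variables complementary to
`{x_i, x_j}`; once sorted, all six carry the same sign.
-/

open MvPolynomial ExteriorAlgebra

set_option maxHeartbeats 1000000

variable (k : Type*) [Field k]

/-- `x_a ∧ x_b ∧ x_c` in the exterior algebra of the space of linear forms. -/
noncomputable def w3 (a b c : Fin 5) : ExteriorAlgebra k (MvPolynomial (Fin 5) k) :=
  ι k (X a) * ι k (X b) * ι k (X c)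

/-- The Koszul syzygy matrix `d₂` of the complete intersection `(x₀,…,x₄)`. -/
noncomputable def d2mat : Fin 5 → Fin 10 → MvPolynomial (Fin 5) k :=
  ![![-X 4, 0, 0, 0, -X 3, 0, 0, -X 2, 0, -X 1],
    ![0, -X 4, 0, 0, 0, -X 3, 0, 0, -X 2, X 0],
    ![0, 0, -X 4, 0, 0, 0, -X 3, X 0, X 1, 0],
    ![0, 0, 0, -X 4, X 0, X 1, X 2, 0, 0, 0],
    ![X 0, X 1, X 2, X 3, 0, 0, 0, 0, 0, 0]]

/-- The symmetric matrix `d₃` of syzygies of `d₂`. -/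
noncomputable def d3mat : Fin 10 → Fin 10 → MvPolynomial (Fin 5) k :=
  ![![0, 0, 0, 0, 0, -X 2, X 1, 0, X 3, 0],
    ![0, 0, 0, 0, X 2, 0, -X 0, -X 3, 0, 0],
    ![0, 0, 0, 0, -X 1, X 0, 0, 0, 0, X 3],
    ![0, 0, 0, 0, 0, 0, 0, X 1, -X 0, -X 2],
    ![0, X 2, -X 1, 0, 0, 0, 0, 0, -X 4, 0],
    ![-X 2, 0, X 0, 0, 0, 0, 0, X 4, 0, 0],
    ![X 1, -X 0, 0, 0, 0, 0, 0, 0, 0, -X 4],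
    ![0, -X 3, 0, X 1, 0, X 4, 0, 0, 0, 0],
    ![X 3, 0, 0, -X 0, -X 4, 0, 0, 0, 0, 0],
    ![0, 0, X 3, -X 2, 0, 0, -X 4, 0, 0, 0]]

/-- `d₄ = −d₂ᵗ`. -/
noncomputable def d4mat : Fin 10 → Fin 5 → MvPolynomial (Fin 5) k :=
  fun i j => -d2mat k j i

namespace ExteriorAlgebra

variable {R M : Type*} [CommRing R] [AddCommGroup M] [Module R M]

theorem ι_mul_ι_swap (x y : M) : ι R y * ι R x = -(ι R x * ι R y) :=
  eq_neg_of_add_eq_zero_left (ι_add_mul_swap y x)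

theorem ι_mul_ι_mul_swap (x y : M) (a : ExteriorAlgebra R M) :
    ι R y * (ι R x * a) = -(ι R x * (ι R y * a)) := by
  rw [← mul_assoc, ι_mul_ι_swap, neg_mul, mul_assoc]

end ExteriorAlgebra

theorem wedge_composition_koszul_D4 :
    ∀ i j, (∑ a : Fin 10, ∑ b : Fin 10,
        ι k (d2mat k i a) * ι k (d3mat k a b) * ι k (d4mat k b j))
      = (6 : ℤ) •
        (![![0, w3 k 2 3 4, -w3 k 1 3 4, w3 k 1 2 4, -w3 k 1 2 3],
           ![-w3 k 2 3 4, 0, w3 k 0 3 4, -w3 k 0 2 4, w3 k 0 2 3],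
           ![w3 k 1 3 4, -w3 k 0 3 4, 0, w3 k 0 1 4, -w3 k 0 1 3],
           ![-w3 k 1 2 4, w3 k 0 2 4, -w3 k 0 1 4, 0, w3 k 0 1 2],
           ![w3 k 1 2 3, -w3 k 0 2 3, w3 k 0 1 3, -w3 k 0 1 2, 0]] i j) := by
  -- The order hypotheses only orient the rewrites, so that `simp` sorts every wedge monomial.
  have sort (i j : Fin 5) (_ : i < j) :
      ι k (X j : MvPolynomial (Fin 5) k) * ι k (X i) = -(ι k (X i) * ι k (X j)) :=
    ι_mul_ι_swap _ _
  have sort_mul (i j : Fin 5) (_ : i < j) (a : ExteriorAlgebra k (MvPolynomial (Fin 5) k)) :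
      ι k (X j : MvPolynomial (Fin 5) k) * (ι k (X i) * a) = -(ι k (X i) * (ι k (X j) * a)) :=
    ι_mul_ι_mul_swap _ _ _
  intro i j
  fin_cases i <;> fin_cases j <;>
    simp only [d2mat, d3mat, d4mat, w3, Fin.sum_univ_succ, Fin.sum_univ_zero, Fin.reduceFinMk,
      Matrix.cons_val, Matrix.cons_val_zero, Matrix.cons_val_succ, map_neg, map_zero, neg_neg,
      neg_mul, mul_neg, zero_mul, mul_zero, add_zero, zero_add, neg_zero, smul_zero] <;>
    simp (disch := decide) only [mul_assoc, sort, sort_mul, neg_mul, mul_neg, neg_neg] <;>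
    abel
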